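/- If A is a real symmetric n×n matrix with energy E(A) (sum of absolute values of eigenvalues), and M is the (p+q)×(p+q) matrix [[I_p, J], [J, 0]], then the energy of the Kronecker product M ⊗ A equals (p − 1 + √(1+4pq)) · E(A). -/

import Mathlib

open Polynomial Matrix Kronecker

/-- The block matrix `M = [[I_p, J_{p×q}], [J_{q×p}, 0_q]]`. -/
noncomputable def splitM (p q : ℕ) : Matrix (Fin p ⊕ Fin q) (Fin p ⊕ Fin q) ℝ :=
  Matrix.fromBlocks 1 (Matrix.of fun _ _ => 1) (Matrix.of fun _ _ => 1) 0

/-- The energy of a real matrix: the sum of the absolute values of its eigenvalues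
(the roots of its characteristic polynomial) counted with multiplicity. -/
noncomputable def energy {n : Type*} [Fintype n] [DecidableEq n] (M : Matrix n n ℝ) : ℝ :=
  (M.charpoly.roots.map fun x => |x|).sum

section Aux

variable {n : Type*} [Fintype n] [DecidableEq n]

lemma my_charpoly_diagonal (d : n → ℝ) :
    (Matrix.diagonal d).charpoly = (Finset.univ.val.map fun i => X - C (d i)).prod := by
  unfold Matrix.charpoly
  have : charmatrix (Matrix.diagonal d) = Matrix.diagonal fun i => X - C (d i) := by
    ext i j
    by_cases h : i = j <;> simp [charmatrix_apply, Matrix.diagonal_apply, h]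
  rw [this, det_diagonal, ← Finset.prod_eq_multiset_prod]

lemma my_roots_charpoly_diagonal (d : n → ℝ) :
    (Matrix.diagonal d).charpoly.roots = Finset.univ.val.map d := by
  rw [my_charpoly_diagonal,
    show (Multiset.map (fun i => X - C (d i)) Finset.univ.val)
        = Multiset.map (fun a => X - C a) (Multiset.map d Finset.univ.val) by
      rw [Multiset.map_map]; rfl]
  exact roots_multiset_prod_X_sub_C _

lemma my_energy_diagonal (d : n → ℝ) :
    energy (Matrix.diagonal d) = ∑ i, |d i| := by
  rw [energy, my_roots_charpoly_diagonal, Multiset.map_map, Finset.sum_eq_multiset_sum]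
  rfl

lemma my_charpoly_conj (P N Q : Matrix n n ℝ) (h1 : P * Q = 1) :
    (P * N * Q).charpoly = N.charpoly := by
  have hPQ : (P.map C) * (Q.map C) = 1 := by
    rw [← Matrix.map_mul, h1, Matrix.map_one _ (map_zero C) (map_one C)]
  unfold Matrix.charpoly
  have hd : (Matrix.diagonal fun _ : n => (X : ℝ[X])) = (X : ℝ[X]) • 1 := by
    rw [smul_eq_diagonal_mul, Matrix.mul_one]
  have key : charmatrix (P * N * Q) = P.map C * charmatrix N * Q.map C := by
    unfold charmatrix
    rw [Matrix.mul_sub, Matrix.sub_mul, scalar_apply, hd]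
    congr 1
    · rw [Matrix.mul_smul, Matrix.mul_one, Matrix.smul_mul, hPQ]
    · rw [RingHom.mapMatrix_apply, RingHom.mapMatrix_apply, ← Matrix.map_mul, ← Matrix.map_mul]
  have h2 : (P.map C).det * (Q.map C).det = 1 := by rw [← det_mul, hPQ, det_one]
  rw [key, det_mul, det_mul, mul_right_comm, h2, one_mul]

lemma my_energy_hermitian (B : Matrix n n ℝ) (hB : B.IsHermitian) :
    energy B = ∑ i, |hB.eigenvalues i| := by
  have hU := hB.spectral_theorem
  rw [RCLike.ofReal_real_eq_id] at hU
  simp only [Function.id_comp] at hU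
  have h1 : (hB.eigenvectorUnitary : Matrix n n ℝ) *
      (star hB.eigenvectorUnitary : Matrix n n ℝ) = 1 :=
    Matrix.mem_unitaryGroup_iff.mp hB.eigenvectorUnitary.2
  rw [show energy B = energy (Matrix.diagonal hB.eigenvalues) by
    unfold energy
    rw [show B.charpoly = (Matrix.diagonal hB.eigenvalues).charpoly by
      conv_lhs => rw [hU]
      exact my_charpoly_conj _ _ _ h1]]
  exact my_energy_diagonal _

lemma my_energy_kron {m : Type*} [Fintype m] [DecidableEq m]
    (M : Matrix m m ℝ) (hM : M.IsHermitian) (A : Matrix n n ℝ) (hA : A.IsHermitian) :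
    energy (M ⊗ₖ A) = (∑ i, |hM.eigenvalues i|) * (∑ j, |hA.eigenvalues j|) := by
  have hUM := hM.spectral_theorem
  have hUA := hA.spectral_theorem
  rw [RCLike.ofReal_real_eq_id] at hUM hUA
  simp only [Function.id_comp] at hUM hUA
  set U := (hM.eigenvectorUnitary : Matrix m m ℝ) with hUdef
  set V := (hA.eigenvectorUnitary : Matrix n n ℝ) with hVdef
  have h1 : (U ⊗ₖ V) * ((star U) ⊗ₖ (star V)) = 1 := by
    rw [← Matrix.mul_kronecker_mul, Matrix.mem_unitaryGroup_iff.mp hM.eigenvectorUnitary.2,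
      Matrix.mem_unitaryGroup_iff.mp hA.eigenvectorUnitary.2, Matrix.one_kronecker_one]
  have key : M ⊗ₖ A = (U ⊗ₖ V) *
      (Matrix.diagonal fun ij : m × n => hM.eigenvalues ij.1 * hA.eigenvalues ij.2) *
      ((star U) ⊗ₖ (star V)) := by
    conv_lhs => rw [hUM, hUA]
    rw [← Matrix.diagonal_kronecker_diagonal, ← Matrix.mul_kronecker_mul,
      ← Matrix.mul_kronecker_mul]
    rfl
  rw [show energy (M ⊗ₖ A) = ∑ ij : m × n, |hM.eigenvalues ij.1 * hA.eigenvalues ij.2| by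
    unfold energy
    rw [key, my_charpoly_conj _ _ _ h1, my_roots_charpoly_diagonal, Multiset.map_map,
      Finset.sum_eq_multiset_sum]
    rfl]
  rw [Finset.sum_mul_sum, ← Fintype.sum_prod_type']
  exact Finset.sum_congr rfl fun ij _ => abs_mul _ _

end Aux

lemma splitM_isHermitian (p q : ℕ) : (splitM p q).IsHermitian := by
  ext (i | i) (j | j) <;>
    simp [splitM, Matrix.conjTranspose_apply, Matrix.one_apply, eq_comm]

lemma my_eval_charpoly {n : Type*} [Fintype n] [DecidableEq n] (M : Matrix n n ℝ) (x : ℝ) :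
    M.charpoly.eval x = (Matrix.diagonal (fun _ => x) - M).det := by
  rw [Matrix.charpoly, ← coe_evalRingHom, RingHom.map_det]
  congr 1
  ext i j
  by_cases h : i = j <;>
    simp [charmatrix_apply, Matrix.diagonal_apply, h]

lemma splitM_det (p q : ℕ) (x : ℝ) (hx0 : x ≠ 0) (hx1 : x - 1 ≠ 0) :
    (Matrix.diagonal (fun _ : Fin (p+1) ⊕ Fin (q+1) => x) - splitM (p+1) (q+1)).det
      = x ^ (q+1) * ((x-1) ^ (p+1) *
        (1 + (p+1:ℝ) * ((1:ℝ) * ((x-1)⁻¹ * -((q+1:ℝ) * x⁻¹))))) := by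
  have hblock : (Matrix.diagonal (fun _ : Fin (p+1) ⊕ Fin (q+1) => x)) - splitM (p+1) (q+1) =
      Matrix.fromBlocks (Matrix.diagonal (fun _ : Fin (p+1) => x - 1))
        (Matrix.of fun _ _ => (-1:ℝ)) (Matrix.of fun _ _ => (-1:ℝ))
        (Matrix.diagonal fun _ : Fin (q+1) => x) := by
    ext (i|i) (j|j)
    · by_cases h : i = j <;>
      simp [splitM, Matrix.diagonal_apply, Matrix.one_apply, h]
    · simp [splitM, Matrix.diagonal_apply, Matrix.one_apply]
    · simp [splitM, Matrix.diagonal_apply, Matrix.one_apply]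
    · by_cases h : i = j <;>
      simp [splitM, Matrix.diagonal_apply, Matrix.one_apply, h]
  rw [hblock]
  haveI : Invertible (Matrix.diagonal fun _ : Fin (q+1) => x) :=
    (Matrix.diagonal fun _ : Fin (q+1) => x).invertibleOfIsUnitDet
      (by simp [Matrix.det_diagonal, hx0])
  have hinv : ⅟(Matrix.diagonal fun _ : Fin (q+1) => x) =
      Matrix.diagonal fun _ : Fin (q+1) => x⁻¹ := by
    apply invOf_eq_right_inv
    rw [Matrix.diagonal_mul_diagonal]
    simp [mul_inv_cancel₀ hx0]
  rw [Matrix.det_fromBlocks₂₂, hinv, Matrix.det_diagonal]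
  simp only [Finset.prod_const, Finset.card_univ, Fintype.card_fin]
  congr 1
  -- inner determinant
  have hmid : (Matrix.of fun (_ : Fin (p+1)) (_ : Fin (q+1)) => (-1:ℝ)) *
      (Matrix.diagonal fun _ : Fin (q+1) => x⁻¹) *
      (Matrix.of fun (_ : Fin (q+1)) (_ : Fin (p+1)) => (-1:ℝ)) =
      Matrix.of fun (_ : Fin (p+1)) (_ : Fin (p+1)) => (q+1:ℝ) * x⁻¹ := by
    ext i j
    simp [Matrix.mul_apply, Matrix.diagonal_apply, Finset.sum_ite_eq, Finset.mul_sum]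
  rw [hmid]
  have hcol : (Matrix.diagonal (fun _ : Fin (p+1) => x - 1)) -
        Matrix.of (fun (_ : Fin (p+1)) (_ : Fin (p+1)) => (q+1:ℝ) * x⁻¹)
      = Matrix.diagonal (fun _ : Fin (p+1) => x - 1) +
        Matrix.replicateCol (Fin 1) (fun _ => -((q+1:ℝ) * x⁻¹)) * Matrix.replicateRow (Fin 1) (fun _ => (1:ℝ)) := by
    ext i j
    simp [Matrix.mul_apply]
    ring
  rw [hcol, Matrix.det_add_mul _ _ (by simp [Matrix.det_diagonal, hx1])]
  have hinv2 : (Matrix.diagonal (fun _ : Fin (p+1) => x - 1))⁻¹ =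
      Matrix.diagonal fun _ : Fin (p+1) => (x-1)⁻¹ := by
    apply Matrix.inv_eq_right_inv
    rw [Matrix.diagonal_mul_diagonal]
    simp [mul_inv_cancel₀ hx1]
  rw [hinv2, Matrix.det_diagonal]
  simp only [Finset.prod_const, Finset.card_univ, Fintype.card_fin]
  congr 1
  have hdet1 : ∀ (N : Matrix (Fin 1) (Fin 1) ℝ),
      @Matrix.det (Fin 1) (fun a b => decidableEq_of_subsingleton a b) _ ℝ _ N = N 0 0 := by
    intro N
    convert Matrix.det_fin_one N using 2
  rw [Matrix.det_fin_one]
  simp [Matrix.mul_apply, Matrix.diagonal_apply, Finset.sum_ite_eq, Finset.sum_ite_eq',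
    Finset.mul_sum, Finset.sum_const]

lemma charpoly_splitM (p q : ℕ) :
    (splitM (p+1) (q+1)).charpoly =
      (X - C 1)^p * X^q *
        ((X - C ((1 + Real.sqrt (1+4*(p+1)*(q+1)))/2)) *
         (X - C ((1 - Real.sqrt (1+4*(p+1)*(q+1)))/2))) := by
  set s : ℝ := Real.sqrt (1+4*(p+1)*(q+1)) with hs
  have hs2 : s^2 = 1 + 4*(p+1)*(q+1) := Real.sq_sqrt (by positivity)
  apply eq_of_infinite_eval_eq
  have hinf : (({0, 1} : Set ℝ)ᶜ).Infinite :=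
    (Set.toFinite ({0, 1} : Set ℝ)).infinite_compl
  refine hinf.mono ?_
  rintro x hx
  simp only [Set.mem_compl_iff, Set.mem_insert_iff, Set.mem_singleton_iff, not_or] at hx
  obtain ⟨hx0, hx1⟩ := hx
  have hx1' : x - 1 ≠ 0 := sub_ne_zero.mpr hx1
  show eval x _ = eval x _
  rw [my_eval_charpoly, splitM_det p q x hx0 hx1']
  simp only [eval_mul, eval_pow, eval_sub, eval_X, eval_C, eval_one]
  have hquad : (x - (1 + s)/2) * (x - (1 - s)/2) = x^2 - x - (p+1)*(q+1) := by
    linear_combination (-1/4 : ℝ) * hs2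
  rw [hquad, pow_succ x q, pow_succ (x-1) p]
  field_simp
  ring

lemma energy_splitM (p q : ℕ) :
    energy (splitM (p+1) (q+1)) = p + Real.sqrt (1+4*(p+1)*(q+1)) := by
  set s : ℝ := Real.sqrt (1+4*(p+1)*(q+1)) with hs
  have hs1 : 1 ≤ s := by
    have h1 := Real.sq_sqrt (show (0:ℝ) ≤ 1+4*(p+1)*(q+1) by positivity)
    have h2 := Real.sqrt_nonneg (1+4*((p:ℝ)+1)*((q:ℝ)+1))
    nlinarith [show (0:ℝ) ≤ 4*(p+1)*(q+1) by positivity]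
  set a : ℝ := (1 + s)/2 with ha
  set b : ℝ := (1 - s)/2 with hb
  have hm1 : ((X : ℝ[X]) - C 1)^p ≠ 0 := ((monic_X_sub_C (1:ℝ)).pow p).ne_zero
  have hm2 : ((X : ℝ[X]))^q ≠ 0 := (monic_X_pow q).ne_zero
  have hm3 : ((X : ℝ[X]) - C a) * (X - C b) ≠ 0 :=
    ((monic_X_sub_C a).mul (monic_X_sub_C b)).ne_zero
  unfold energy
  rw [charpoly_splitM, roots_mul (mul_ne_zero (mul_ne_zero hm1 hm2) hm3),
    roots_mul (mul_ne_zero hm1 hm2), roots_mul (mul_ne_zero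
      ((monic_X_sub_C a).ne_zero) ((monic_X_sub_C b).ne_zero)),
    roots_pow, roots_pow, roots_X, roots_X_sub_C, roots_X_sub_C, roots_X_sub_C]
  simp only [Multiset.map_add, Multiset.map_nsmul, Multiset.map_singleton,
    Multiset.sum_add, Multiset.sum_singleton]
  rw [abs_one, abs_zero, abs_of_nonneg (by rw [ha]; linarith : (0:ℝ) ≤ a),
    abs_of_nonpos (by rw [hb]; linarith : b ≤ (0:ℝ))]
  simp only [Multiset.sum_replicate, Multiset.nsmul_singleton, smul_eq_mul]
  rw [ha, hb]
  ring

theorem energy_kronecker_splitM (p q n : ℕ) (hp : 1 ≤ p) (hq : 1 ≤ q)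
    (A : Matrix (Fin n) (Fin n) ℝ) (hA : A.IsHermitian) :
    energy (splitM p q ⊗ₖ A) = ((p : ℝ) - 1 + Real.sqrt (1 + 4 * p * q)) * energy A := by
  obtain ⟨p', rfl⟩ : ∃ k, p = k + 1 := ⟨p - 1, (Nat.succ_pred_eq_of_pos hp).symm⟩
  obtain ⟨q', rfl⟩ : ∃ k, q = k + 1 := ⟨q - 1, (Nat.succ_pred_eq_of_pos hq).symm⟩
  have hM := splitM_isHermitian (p'+1) (q'+1)
  rw [my_energy_kron _ hM _ hA, ← my_energy_hermitian _ hM, ← my_energy_hermitian _ hA,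
    energy_splitM]
  congr 1
  push_cast
  ring_nf
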